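/- Let ∇ be an affine connection on a smooth manifold M with associated torsion-free connection ∇⁰. For every vector field X on M, the covariant derivative ∇⁰_X equals (1/2)(L^s_X + L_X) as derivations of the algebra Υ^•(M) of symmetric forms, where L_X is the ordinary Lie derivative and L^s_X the symmetric Lie derivative of ∇. -/

import Mathlib

open scoped Manifold
open Function

noncomputable section

namespace SymCartan

variable {E : Type} [NormedAddCommGroup E] [NormedSpace ℝ E]
  {H : Type} [TopologicalSpace H] {I : ModelWithCorners ℝ E H}
  {M : Type} [TopologicalSpace M] [ChartedSpace H M] [IsManifold I (⊤ : ℕ∞) M]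

/-- A (not necessarily smooth) vector field on `M`: a section of the tangent bundle. -/
def VF (I : ModelWithCorners ℝ E H) (M : Type) [TopologicalSpace M] [ChartedSpace H M] : Type :=
  ∀ x : M, TangentSpace I x

/-- Smoothness of a vector field, i.e. smoothness as a section of the tangent bundle. -/
def SmoothVF (X : VF I M) : Prop :=
  ContMDiff I I.tangent (⊤ : ℕ∞) (fun x => (⟨x, X x⟩ : TangentBundle I M))

/-- Smoothness of a real function on `M`. -/
def SmoothF (I : ModelWithCorners ℝ E H) {M : Type} [TopologicalSpace M] [ChartedSpace H M]
    (f : M → ℝ) : Prop :=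
  ContMDiff I 𝓘(ℝ, ℝ) (⊤ : ℕ∞) f

/-- The action of a vector field on a function, `(X f)(x) = df_x(X_x)`. -/
def vAct (X : VF I M) (f : M → ℝ) : M → ℝ := fun x => mfderiv I 𝓘(ℝ, ℝ) f x (X x)

/-- An affine connection on `M`: a covariant derivative on vector fields, with the usual
axioms required when all inputs are smooth. -/
structure AffConn (I : ModelWithCorners ℝ E H) (M : Type) [TopologicalSpace M]
    [ChartedSpace H M] [IsManifold I (⊤ : ℕ∞) M] where
  cov : VF I M → VF I M → VF I M
  cov_smooth : ∀ X Y : VF I M, SmoothVF X → SmoothVF Y → SmoothVF (cov X Y)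
  cov_add_left : ∀ X X' Y : VF I M, SmoothVF X → SmoothVF X' → SmoothVF Y →
    cov (fun x => X x + X' x) Y = fun x => cov X Y x + cov X' Y x
  cov_smul_left : ∀ (f : M → ℝ) (X Y : VF I M), SmoothF I f → SmoothVF X → SmoothVF Y →
    cov (fun x => f x • X x) Y = fun x => f x • cov X Y x
  cov_add_right : ∀ X Y Y' : VF I M, SmoothVF X → SmoothVF Y → SmoothVF Y' →
    cov X (fun x => Y x + Y' x) = fun x => cov X Y x + cov X Y' x
  cov_smul_right : ∀ (f : M → ℝ) (X Y : VF I M), SmoothF I f → SmoothVF X → SmoothVF Y →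
    cov X (fun x => f x • Y x) = fun x => vAct X f x • Y x + f x • cov X Y x

/-- The symmetric bracket `[X,Y]_s = ∇_X Y + ∇_Y X` of a connection. -/
def sBr (D : AffConn I M) (X Y : VF I M) : VF I M := fun x => D.cov X Y x + D.cov Y X x

/-- The Lie bracket of two vector fields: the unique smooth vector field acting on smooth
functions as the commutator `X ∘ Y - Y ∘ X` (junk value if no such field exists). -/
def lieB (X Y : VF I M) : VF I M := by
  classical
  exact if h : ∃ Z : VF I M, SmoothVF Z ∧ ∀ f : M → ℝ, SmoothF I f →
      vAct Z f = fun x => vAct X (vAct Y f) x - vAct Y (vAct X f) x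
    then h.choose else fun _ => 0

/-- A connection is torsion-free iff `∇_X Y - ∇_Y X` acts on smooth functions as the
commutator of `X` and `Y`, i.e. iff it equals the Lie bracket `[X, Y]`. -/
def TorsionFree (D : AffConn I M) : Prop :=
  ∀ X Y : VF I M, SmoothVF X → SmoothVF Y → ∀ f : M → ℝ, SmoothF I f →
    (fun x => vAct (D.cov X Y) f x - vAct (D.cov Y X) f x) =
      fun x => vAct X (vAct Y f) x - vAct Y (vAct X f) x

/-- The curvature `R(X,Y)Z = ∇_X ∇_Y Z - ∇_Y ∇_X Z - ∇_[X,Y] Z` of a connection. -/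
def curv (D : AffConn I M) (X Y Z : VF I M) : VF I M :=
  fun x => D.cov X (D.cov Y Z) x - D.cov Y (D.cov X Z) x - D.cov (lieB X Y) Z x

/-! ### Symmetric forms, Koszul style.

A covariant tensor on a manifold is faithfully encoded by its pairing with (smooth) vector
fields, which is a function-multilinear map on vector fields. A "degree `r`" tensor is
encoded as a map taking a sequence of vector fields (only the first `r` entries matter)
to a function on `M`. -/

/-- Koszul encoding of covariant tensor fields. -/
def TensorK (I : ModelWithCorners ℝ E H) (M : Type) [TopologicalSpace M]
    [ChartedSpace H M] : Type :=
  (ℕ → VF I M) → M → ℝ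

/-- Equality of (Koszul-encoded) tensors: equality of values on smooth vector fields. -/
def EqTen (φ ψ : TensorK I M) : Prop :=
  ∀ v : ℕ → VF I M, (∀ i, SmoothVF (v i)) → φ v = ψ v

/-- `φ` is a smooth symmetric `r`-form: it only depends on the first `r` arguments,
it is symmetric and `C^∞(M)`-multilinear in them, and maps smooth fields to smooth
functions. -/
def IsSymTensor (r : ℕ) (φ : TensorK I M) : Prop :=
  (∀ v w : ℕ → VF I M, (∀ i, SmoothVF (v i)) → (∀ i, SmoothVF (w i)) →
      (∀ i, i < r → v i = w i) → φ v = φ w) ∧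
  (∀ v : ℕ → VF I M, (∀ i, SmoothVF (v i)) → ∀ i j : ℕ, i < r → j < r →
      φ (v ∘ Equiv.swap i j) = φ v) ∧
  (∀ v : ℕ → VF I M, (∀ i, SmoothVF (v i)) → ∀ i, i < r →
      ∀ X Y : VF I M, SmoothVF X → SmoothVF Y → ∀ c : ℝ,
      φ (Function.update v i (fun x => X x + c • Y x)) =
        fun x => φ (Function.update v i X) x + c * φ (Function.update v i Y) x) ∧
  (∀ v : ℕ → VF I M, (∀ i, SmoothVF (v i)) → ∀ i, i < r → ∀ f : M → ℝ, SmoothF I f →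
      φ (Function.update v i (fun x => f x • v i x)) = fun x => f x * φ v x) ∧
  (∀ v : ℕ → VF I M, (∀ i, SmoothVF (v i)) → SmoothF I (φ v))

/-- The tensor of degree 0 associated to a function. -/
def ofFun (I : ModelWithCorners ℝ E H) {M : Type} [TopologicalSpace M] [ChartedSpace H M]
    (f : M → ℝ) : TensorK I M := fun _ => f

/-- The symmetric product `φ ⊙ ψ` of a symmetric `r`-form and a symmetric `l`-form:
`(φ⊙ψ)(v₁,…,v_{r+l}) = (1/(r! l!)) ∑_{σ ∈ S_{r+l}} φ(v_{σ(1)},…,v_{σ(r)}) ψ(v_{σ(r+1)},…)`. -/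
def mulT (r l : ℕ) (φ ψ : TensorK I M) : TensorK I M :=
  fun v x =>
    (((r.factorial * l.factorial : ℕ) : ℝ))⁻¹ *
      ∑ σ : Equiv.Perm (Fin (r + l)),
        φ (fun n => if h : n < r + l then v (σ ⟨n, h⟩ : Fin (r + l)) else v n) x *
        ψ (fun n => if h : r + n < r + l then v (σ ⟨r + n, h⟩ : Fin (r + l)) else v n) x

/-- Contraction `ι_X` with a vector field (degree `r` is the degree of the argument;
by convention `ι_X` vanishes on degree 0). -/
def iotaT (r : ℕ) (X : VF I M) (φ : TensorK I M) : TensorK I M :=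
  match r with
  | 0 => fun _ _ => 0
  | _ + 1 => fun v => φ (fun n => if n = 0 then X else v (n - 1))

/-- The covariant derivative `∇_X φ` of an `r`-form, via the Koszul formula
`(∇_X φ)(v₁,…,v_r) = X(φ(v)) - ∑ᵢ φ(…, ∇_X vᵢ, …)`. -/
def covT (D : AffConn I M) (r : ℕ) (X : VF I M) (φ : TensorK I M) : TensorK I M :=
  fun v x => vAct X (φ v) x -
    ∑ i ∈ Finset.range r, φ (Function.update v i (D.cov X (v i))) x

/-- The symmetric derivative `∇^s φ = (r+1)·sym(∇φ)` of an `r`-form, i.e.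
`(∇^s φ)(v₀,…,v_r) = ∑ⱼ (∇_{vⱼ} φ)(v₀,…,v̂ⱼ,…,v_r)`. -/
def symD (D : AffConn I M) (r : ℕ) (φ : TensorK I M) : TensorK I M :=
  fun v x => ∑ j ∈ Finset.range (r + 1),
    covT D r (v j) φ (fun n => if n < j then v n else v (n + 1)) x

/-- The symmetric Lie derivative `L^s_X = ι_X ∘ ∇^s - ∇^s ∘ ι_X` on `r`-forms. -/
def symL (D : AffConn I M) (r : ℕ) (X : VF I M) (φ : TensorK I M) : TensorK I M :=
  fun v x => iotaT (r + 1) X (symD D r φ) v x - symD D (r - 1) (iotaT r X φ) v x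

/-- The (ordinary) Lie derivative of an `r`-form along a vector field, Koszul style. -/
def lieT (r : ℕ) (X : VF I M) (φ : TensorK I M) : TensorK I M :=
  fun v x => vAct X (φ v) x -
    ∑ i ∈ Finset.range r, φ (Function.update v i (lieB X (v i))) x

/-- The associated torsion-free connection `∇⁰_X Y = ∇_X Y - (1/2) T_∇(X,Y)` of a connection. -/
def covTF (D : AffConn I M) (X Y : VF I M) : VF I M :=
  fun x => D.cov X Y x - (2⁻¹ : ℝ) • (D.cov X Y x - D.cov Y X x - lieB X Y x)

/-- The covariant derivative of an `r`-form along `X` with respect to a covariant derivative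
operator `c` on vector fields, via the Koszul formula. -/
def covTgen (c : VF I M → VF I M → VF I M) (r : ℕ) (X : VF I M) (φ : TensorK I M) :
    TensorK I M :=
  fun v x => vAct X (φ v) x - ∑ i ∈ Finset.range r, φ (Function.update v i (c X (v i))) x

/-! Unwinding `L^s_X = ι_X ∇^s - ∇^s ι_X` on a symmetric `r`-form `φ`, each term of
`∇^s φ (X, v)` differentiating along `v_k` cancels against the corresponding term of
`∇^s (ι_X φ) (v)`, except for the part where `∇_{v_k}` hits the slot filled by `X`. By symmetry
of `φ` this leaves `L^s_X φ (v) = (∇_X φ)(v) - ∑ₖ φ(…, ∇_{v_k} X, …)`. Since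
`∇⁰_X Y = ½ (∇_X Y + ∇_Y X + [X, Y])`, linearity of `φ` in each slot makes `(∇⁰_X φ)(v)` the
average of this and `L_X φ (v) = X(φ v) - ∑ₖ φ(…, [X, v_k], …)`. -/

end SymCartan

namespace SymCartan

variable {E : Type} [NormedAddCommGroup E] [NormedSpace ℝ E]
  {H : Type} [TopologicalSpace H] {I : ModelWithCorners ℝ E H}
  {M : Type} [TopologicalSpace M] [ChartedSpace H M]

-- Spelled as in `iotaT` and `symD`, so that these unfold to them by `rfl`.
def seqCons {α : Type*} (a : α) (s : ℕ → α) : ℕ → α := fun n => if n = 0 then a else s (n - 1)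

def seqErase {α : Type*} (j : ℕ) (s : ℕ → α) : ℕ → α := fun n => if n < j then s n else s (n + 1)

section Seq

variable {α : Type*}

@[simp]
lemma seqCons_zero (a : α) (s : ℕ → α) : seqCons a s 0 = a := rfl

@[simp]
lemma seqCons_succ (a : α) (s : ℕ → α) (n : ℕ) : seqCons a s (n + 1) = s n := rfl

lemma seqErase_zero_seqCons (a : α) (s : ℕ → α) : seqErase 0 (seqCons a s) = s := by
  funext n
  simp [seqErase]

lemma seqErase_succ_seqCons (a : α) (s : ℕ → α) (j : ℕ) :
    seqErase (j + 1) (seqCons a s) = seqCons a (seqErase j s) := by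
  funext n
  rcases n with _ | n <;> simp [seqErase, seqCons]

lemma update_seqCons_zero (a b : α) (s : ℕ → α) :
    Function.update (seqCons a s) 0 b = seqCons b s := by
  funext n
  rcases n with _ | n <;> simp [seqCons]

lemma update_seqCons_succ (a b : α) (s : ℕ → α) (i : ℕ) :
    Function.update (seqCons a s) (i + 1) b = seqCons a (Function.update s i b) := by
  funext n
  rcases n with _ | n <;> simp [seqCons, Function.update_apply]

lemma seqCons_seqErase_zero (a : α) (s : ℕ → α) :
    seqCons a (seqErase 0 s) = Function.update s 0 a := by
  funext n
  rcases n with _ | n <;> simp [seqCons, seqErase]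

lemma seqErase_succ (s : ℕ → α) (j : ℕ) :
    seqErase (j + 1) s = seqErase j (s ∘ Equiv.swap j (j + 1)) := by
  funext n
  simp only [seqErase, Function.comp_apply]
  rcases lt_trichotomy n j with h | rfl | h
  · rw [if_pos (by omega), if_pos h, Equiv.swap_apply_of_ne_of_ne (by omega) (by omega)]
  · simp
  · rw [if_neg (by omega), if_neg (by omega), Equiv.swap_apply_of_ne_of_ne (by omega) (by omega)]

end Seq

lemma vAct_zero (Z : VF I M) (x : M) : vAct Z (fun _ => (0 : ℝ)) x = 0 := by
  simp [vAct, mfderiv_const]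
  rfl

lemma iotaT_succ_apply (r : ℕ) (X : VF I M) (φ : TensorK I M) (v : ℕ → VF I M) :
    iotaT (r + 1) X φ v = φ (seqCons X v) := rfl

variable [IsManifold I (⊤ : ℕ∞) M]

lemma smoothVF_zero : SmoothVF (I := I) (M := M) (fun _ => 0) :=
  (0 : Cₛ^((⊤ : ℕ∞) : WithTop ℕ∞)⟮I; E, TangentSpace I⟯).contMDiff

lemma SmoothVF.add {X Y : VF I M} (hX : SmoothVF X) (hY : SmoothVF Y) :
    SmoothVF (fun x => X x + Y x) :=
  (ContMDiffSection.mk (V := TangentSpace I) X hX +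
    ContMDiffSection.mk (V := TangentSpace I) Y hY).contMDiff

lemma smoothVF_lieB (X Y : VF I M) : SmoothVF (lieB X Y) := by
  unfold lieB
  split_ifs with h
  · exact (dif_pos h).symm ▸ h.choose_spec.1
  · exact (dif_neg h).symm ▸ smoothVF_zero

lemma SmoothVF.update {v : ℕ → VF I M} (hv : ∀ i, SmoothVF (v i)) {W : VF I M}
    (hW : SmoothVF W) (j i : ℕ) : SmoothVF (Function.update v j W i) := by
  rcases eq_or_ne i j with rfl | h
  · rwa [Function.update_self]
  · rw [Function.update_of_ne h]
    exact hv i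

lemma covTF_eq (D : AffConn I M) (X Y : VF I M) :
    covTF D X Y = fun x => (2⁻¹ : ℝ) • ((D.cov X Y x + D.cov Y X x) + lieB X Y x) := by
  funext x
  simp only [covTF]
  module

namespace IsSymTensor

variable {r : ℕ} {φ : TensorK I M} {v : ℕ → VF I M}

lemma update_add (hφ : IsSymTensor r φ) (hv : ∀ i, SmoothVF (v i)) {i : ℕ} (hi : i < r)
    {A B : VF I M} (hA : SmoothVF A) (hB : SmoothVF B) :
    φ (Function.update v i (fun x => A x + B x)) =
      fun x => φ (Function.update v i A) x + φ (Function.update v i B) x := by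
  simpa using hφ.2.2.1 v hv i hi A B hA hB 1

lemma update_smul (hφ : IsSymTensor r φ) (hv : ∀ i, SmoothVF (v i)) {i : ℕ} (hi : i < r)
    (c : ℝ) {A : VF I M} (hA : SmoothVF A) :
    φ (Function.update v i (fun x => c • A x)) = fun x => c * φ (Function.update v i A) x := by
  have hzero : φ (Function.update v i (fun _ => 0)) = fun _ => 0 := by
    simpa using hφ.2.2.2.1 v hv i hi (fun _ => 0) contMDiff_const
  simpa [hzero] using hφ.2.2.1 v hv i hi (fun _ => 0) A smoothVF_zero hA c

lemma update_covTF (hφ : IsSymTensor r φ) (hv : ∀ i, SmoothVF (v i)) {i : ℕ} (hi : i < r)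
    (D : AffConn I M) {X : VF I M} (hX : SmoothVF X) (x : M) :
    φ (Function.update v i (covTF D X (v i))) x =
      (2⁻¹ : ℝ) * (φ (Function.update v i (D.cov X (v i))) x +
        φ (Function.update v i (D.cov (v i) X)) x + φ (Function.update v i (lieB X (v i))) x) := by
  have hXv := D.cov_smooth _ _ hX (hv i)
  have hvX := D.cov_smooth _ _ (hv i) hX
  rw [covTF_eq, hφ.update_smul hv hi _ ((hXv.add hvX).add (smoothVF_lieB _ _)),
    hφ.update_add hv hi (hXv.add hvX) (smoothVF_lieB _ _), hφ.update_add hv hi hXv hvX]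

/-- The two arguments differ by the cycle `(0 1 … j)`, a product of adjacent transpositions. -/
lemma apply_seqCons_seqErase (hφ : IsSymTensor r φ) {j : ℕ} (hj : j < r)
    (hv : ∀ i, SmoothVF (v i)) {W : VF I M} (hW : SmoothVF W) :
    φ (seqCons W (seqErase j v)) = φ (Function.update v j W) := by
  induction j generalizing v with
  | zero => rw [seqCons_seqErase_zero]
  | succ j ih =>
    have hupd : Function.update (v ∘ Equiv.swap j (j + 1)) j W =
        Function.update v (j + 1) W ∘ Equiv.swap j (j + 1) := by
      rw [Function.update_comp_equiv, Equiv.symm_swap, Equiv.swap_apply_right]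
    rw [seqErase_succ, ih (v := v ∘ Equiv.swap j (j + 1)) (by omega) (fun i => hv _), hupd]
    exact hφ.2.1 _ (SmoothVF.update hv hW (j + 1)) j (j + 1) (by omega) hj

end IsSymTensor

lemma symD_apply (D : AffConn I M) (r : ℕ) (φ : TensorK I M) (w : ℕ → VF I M) (x : M) :
    symD D r φ w x = ∑ j ∈ Finset.range (r + 1), covT D r (w j) φ (seqErase j w) x := rfl

lemma iotaT_symD (D : AffConn I M) (r : ℕ) (X : VF I M) (φ : TensorK I M)
    (v : ℕ → VF I M) (x : M) :
    iotaT (r + 1) X (symD D r φ) v x =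
      covT D r X φ v x + ∑ k ∈ Finset.range r, covT D r (v k) φ (seqCons X (seqErase k v)) x := by
  rw [iotaT_succ_apply, symD_apply, Finset.sum_range_succ', add_comm]
  simp only [seqCons_zero, seqCons_succ, seqErase_zero_seqCons, seqErase_succ_seqCons]

lemma covT_seqCons (D : AffConn I M) (m : ℕ) (X Y : VF I M) (φ : TensorK I M)
    (u : ℕ → VF I M) (x : M) :
    covT D (m + 1) Y φ (seqCons X u) x =
      covT D m Y (iotaT (m + 1) X φ) u x - φ (seqCons (D.cov Y X) u) x := by
  simp only [covT, Finset.sum_range_succ', update_seqCons_succ, update_seqCons_zero,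
    seqCons_succ, seqCons_zero, iotaT_succ_apply]
  ring

lemma symL_apply {r : ℕ} {φ : TensorK I M} (hφ : IsSymTensor r φ) (D : AffConn I M)
    {X : VF I M} (hX : SmoothVF X) {v : ℕ → VF I M} (hv : ∀ i, SmoothVF (v i)) (x : M) :
    symL D r X φ v x =
      covT D r X φ v x - ∑ k ∈ Finset.range r, φ (Function.update v k (D.cov (v k) X)) x := by
  rcases r with _ | m
  · have hzero : symD D 0 (iotaT 0 X φ) v x = 0 := by
      rw [symD_apply]
      simp [covT, iotaT, vAct_zero]
    simp [symL, iotaT_symD, hzero]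
  · have hsym : ∀ k ∈ Finset.range (m + 1), φ (seqCons (D.cov (v k) X) (seqErase k v)) x =
        φ (Function.update v k (D.cov (v k) X)) x := fun k hk => congrFun
      (hφ.apply_seqCons_seqErase (Finset.mem_range.mp hk) hv (D.cov_smooth _ _ (hv k) hX)) x
    simp only [symL, iotaT_symD, covT_seqCons, Finset.sum_sub_distrib, Finset.sum_congr rfl hsym,
      Nat.add_sub_cancel, symD_apply]
    ring

/-- **Statement 8.** For an affine connection `∇` with associated torsion-free connection `∇⁰`
and any vector field `X`, one has `∇⁰_X = (1/2)(L^s_X + L_X)` as derivations of the algebra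
`Υ^•(M)` of symmetric forms. -/
theorem stmt8
    {E : Type} [NormedAddCommGroup E] [NormedSpace ℝ E]
    {H : Type} [TopologicalSpace H] (I : ModelWithCorners ℝ E H)
    (M : Type) [TopologicalSpace M] [ChartedSpace H M] [IsManifold I (⊤ : ℕ∞) M]
    (D : AffConn I M) (X : VF I M) (hX : SmoothVF X)
    (r : ℕ) (φ : TensorK I M) (hφ : IsSymTensor r φ) :
    EqTen (covTgen (covTF D) r X φ)
      (fun v x => (2⁻¹ : ℝ) * (symL D r X φ v x + lieT r X φ v x)) := by
  intro v hv
  funext x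
  have hcovTF : ∀ i ∈ Finset.range r, φ (Function.update v i (covTF D X (v i))) x =
      (2⁻¹ : ℝ) * (φ (Function.update v i (D.cov X (v i))) x +
        φ (Function.update v i (D.cov (v i) X)) x + φ (Function.update v i (lieB X (v i))) x) :=
    fun i hi => hφ.update_covTF hv (Finset.mem_range.mp hi) D hX x
  simp only [covTgen, symL_apply hφ D hX hv, covT, lieT, Finset.sum_congr rfl hcovTF,
    ← Finset.mul_sum, Finset.sum_add_distrib]
  ring

end SymCartan
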